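/- arXiv:2012.01662 — 2 statements merged into one kernel-verified Lean document; each statement's English description precedes it below -/
import Mathlib

section
/- Soundness of the semantic partial correctness calculus SEM: let G be a type, let Atom be a type of atomic commands with a given interpretation ⟦·⟧ₐ : Atom → G → Set (Option G), and let Prog be the inductive type of programs generated by atomic commands, sequential composition P;Q, finite nondeterministic choice, if C then P else Q, try C then P else Q, and iteration P!, with semantics ⟦·⟧ : Prog → G → Set (Option G) defined by: ⟦P;Q⟧ g = {none | none ∈ ⟦P⟧g} ∪ ⋃ H ∈ {H | some H ∈ ⟦P⟧g}, ⟦Q⟧H; choice is union; ⟦if C then P else Q⟧ g = {o | (g ∈ SUCCESS(C) ∧ o ∈ ⟦P⟧g) ∨ (g ∈ FAIL(C) ∧ o ∈ ⟦Q⟧g)}; ⟦try C then P else Q⟧ g = {o | (∃H, some H ∈ ⟦C⟧g ∧ o ∈ ⟦P⟧H) ∨ (g ∈ FAIL(C) ∧ o ∈ ⟦Q⟧g)}; and ⟦P!⟧ g = {some H | Relation.ReflTransGen (fun x y => some y ∈ ⟦P⟧x) g H ∧ H ∈ FAIL(P)}. Let derivability ⊢ {c} P {d} be the inductive predicate generated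 by the rules: [atom] ⊢ {c} a {Slp(c,⟦a⟧ₐ)} for atomic a; [choice] from ⊢ {c} Pᵢ {d} for all branches; [comp] from ⊢ {c} P {e} and ⊢ {e} Q {d}; [cons] from c ⊆ c', ⊢ {c'} P {d'}, d' ⊆ d; [if] from ⊢ {c ∩ SUCCESS(C)} P {d} and ⊢ {c ∩ FAIL(C)} Q {d}; [try] from ⊢ {c ∩ SUCCESS(C)} C;P {d} and ⊢ {c ∩ FAIL(C)} Q {d}; [alap] from ⊢ {c} P {c} conclude ⊢ {c} P! {c ∩ FAIL(P)}. Then ⊢ {c} P {d} implies that {c} P {d} is partially correct with respect to ⟦·⟧. -/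
/-- Programs generated by atomic commands, sequential composition, finite
nondeterministic choice, if-then-else, try-then-else, and iteration. -/
inductive Prog (Atom : Type) : Type where
  | atom : Atom → Prog Atom
  | seq : Prog Atom → Prog Atom → Prog Atom
  | choice : (n : ℕ) → (Fin n → Prog Atom) → Prog Atom
  | ite : Prog Atom → Prog Atom → Prog Atom → Prog Atom
  | tryE : Prog Atom → Prog Atom → Prog Atom → Prog Atom
  | loop : Prog Atom → Prog Atom

/-- Semantics of programs, given an interpretation `A` of atomic commands.
`some H` is a result graph, `none` is failure. -/
def Sem {G Atom : Type} (A : Atom → G → Set (Option G)) : Prog Atom → G → Set (Option G)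
  | .atom a => A a
  | .seq P Q => fun g =>
      {o | o = none ∧ none ∈ Sem A P g} ∪ ⋃ H ∈ {H : G | some H ∈ Sem A P g}, Sem A Q H
  | .choice n f => fun g => ⋃ i : Fin n, Sem A (f i) g
  | .ite C P Q => fun g =>
      {o | ((∃ H : G, some H ∈ Sem A C g) ∧ o ∈ Sem A P g) ∨
           (none ∈ Sem A C g ∧ o ∈ Sem A Q g)}
  | .tryE C P Q => fun g =>
      {o | (∃ H : G, some H ∈ Sem A C g ∧ o ∈ Sem A P H) ∨
           (none ∈ Sem A C g ∧ o ∈ Sem A Q g)}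
  | .loop P => fun g =>
      {o | ∃ H : G, o = some H ∧
        Relation.ReflTransGen (fun x y => some y ∈ Sem A P x) g H ∧ none ∈ Sem A P H}

/-- Graphs from which the program `C` can produce a result graph. -/
def SUCCESS {G Atom : Type} (A : Atom → G → Set (Option G)) (C : Prog Atom) : Set G :=
  {g : G | ∃ H : G, some H ∈ Sem A C g}

/-- Graphs from which the program `C` can fail. -/
def FAIL {G Atom : Type} (A : Atom → G → Set (Option G)) (C : Prog Atom) : Set G :=
  {g : G | none ∈ Sem A C g}

/-- Strongest liberal postcondition of a semantics `S`. -/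
def Slp {G : Type} (c : Set G) (S : G → Set (Option G)) : Set G :=
  {H : G | ∃ g ∈ c, some H ∈ S g}

/-- The triple `{c} P {d}` is partially correct w.r.t. the semantics. -/
def PartiallyCorrect {G Atom : Type} (A : Atom → G → Set (Option G))
    (c : Set G) (P : Prog Atom) (d : Set G) : Prop :=
  ∀ g ∈ c, ∀ H : G, some H ∈ Sem A P g → H ∈ d

/-- The semantic partial correctness calculus SEM. -/
inductive Deriv {G Atom : Type} (A : Atom → G → Set (Option G)) :
    Set G → Prog Atom → Set G → Prop where
  | atom (c : Set G) (a : Atom) : Deriv A c (.atom a) (Slp c (A a))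
  | choice {c d : Set G} {n : ℕ} {f : Fin n → Prog Atom} :
      (∀ i : Fin n, Deriv A c (f i) d) → Deriv A c (.choice n f) d
  | comp {c e d : Set G} {P Q : Prog Atom} :
      Deriv A c P e → Deriv A e Q d → Deriv A c (.seq P Q) d
  | cons {c c' d d' : Set G} {P : Prog Atom} :
      c ⊆ c' → Deriv A c' P d' → d' ⊆ d → Deriv A c P d
  | ifRule {c d : Set G} {C P Q : Prog Atom} :
      Deriv A (c ∩ SUCCESS A C) P d → Deriv A (c ∩ FAIL A C) Q d →
      Deriv A c (.ite C P Q) d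
  | tryRule {c d : Set G} {C P Q : Prog Atom} :
      Deriv A (c ∩ SUCCESS A C) (.seq C P) d → Deriv A (c ∩ FAIL A C) Q d →
      Deriv A c (.tryE C P Q) d
  | alap {c : Set G} {P : Prog Atom} :
      Deriv A c P c → Deriv A c (.loop P) (c ∩ FAIL A P)

theorem some_mem_sem_seq {G Atom : Type} {A : Atom → G → Set (Option G)} {P Q : Prog Atom}
    {g H : G} :
    some H ∈ Sem A (.seq P Q) g ↔ ∃ K, some K ∈ Sem A P g ∧ some H ∈ Sem A Q K := by
  simp [Sem]

theorem Relation.ReflTransGen.mem_of_invariant {α : Type*} {r : α → α → Prop} {s : Set α}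
    (hs : ∀ a b, a ∈ s → r a b → b ∈ s) {x y : α} (hxy : Relation.ReflTransGen r x y)
    (hx : x ∈ s) : y ∈ s := by
  induction hxy with
  | refl => exact hx
  | tail _ hstep ih => exact hs _ _ ih hstep

namespace PartiallyCorrect

variable {G Atom : Type} {A : Atom → G → Set (Option G)}

theorem atom (c : Set G) (a : Atom) : PartiallyCorrect A c (.atom a) (Slp c (A a)) :=
  fun g hg _ hH => ⟨g, hg, hH⟩

theorem choice {c d : Set G} {n : ℕ} {f : Fin n → Prog Atom}
    (hf : ∀ i, PartiallyCorrect A c (f i) d) : PartiallyCorrect A c (.choice n f) d := by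
  intro g hg H hH
  obtain ⟨i, hi⟩ := Set.mem_iUnion.1 hH
  exact hf i g hg H hi

theorem seq {c e d : Set G} {P Q : Prog Atom} (hP : PartiallyCorrect A c P e)
    (hQ : PartiallyCorrect A e Q d) : PartiallyCorrect A c (.seq P Q) d := by
  intro g hg H hH
  obtain ⟨K, hK, hH⟩ := some_mem_sem_seq.1 hH
  exact hQ K (hP g hg K hK) H hH

theorem mono {c c' d d' : Set G} {P : Prog Atom} (hc : c ⊆ c')
    (h : PartiallyCorrect A c' P d') (hd : d' ⊆ d) : PartiallyCorrect A c P d :=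
  fun g hg H hH => hd (h g (hc hg) H hH)

theorem ite {c d : Set G} {C P Q : Prog Atom} (hP : PartiallyCorrect A (c ∩ SUCCESS A C) P d)
    (hQ : PartiallyCorrect A (c ∩ FAIL A C) Q d) : PartiallyCorrect A c (.ite C P Q) d := by
  rintro g hg H (⟨hsucc, hH⟩ | ⟨hfail, hH⟩)
  · exact hP g ⟨hg, hsucc⟩ H hH
  · exact hQ g ⟨hg, hfail⟩ H hH

theorem tryE {c d : Set G} {C P Q : Prog Atom}
    (hP : PartiallyCorrect A (c ∩ SUCCESS A C) (.seq C P) d)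
    (hQ : PartiallyCorrect A (c ∩ FAIL A C) Q d) : PartiallyCorrect A c (.tryE C P Q) d := by
  rintro g hg H (⟨K, hK, hH⟩ | ⟨hfail, hH⟩)
  · exact hP g ⟨hg, K, hK⟩ H (some_mem_sem_seq.2 ⟨K, hK, hH⟩)
  · exact hQ g ⟨hg, hfail⟩ H hH

theorem loop {c : Set G} {P : Prog Atom} (h : PartiallyCorrect A c P c) :
    PartiallyCorrect A c (.loop P) (c ∩ FAIL A P) := by
  rintro g hg H ⟨K, hKH, hsteps, hfail⟩
  cases hKH
  exact ⟨hsteps.mem_of_invariant (fun a b ha hab => h a ha b hab) hg, hfail⟩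

end PartiallyCorrect

/-- Soundness of the semantic partial correctness calculus SEM. -/
theorem SEM_sound {G Atom : Type} (A : Atom → G → Set (Option G))
    (c d : Set G) (P : Prog Atom) (h : Deriv A c P d) :
    PartiallyCorrect A c P d := by
  induction h with
  | atom c a => exact .atom c a
  | choice _ ih => exact .choice ih
  | comp _ _ ihP ihQ => exact ihP.seq ihQ
  | cons hc _ hd ih => exact .mono hc ih hd
  | ifRule _ _ ihP ihQ => exact .ite ihP ihQ
  | tryRule _ _ ihP ihQ => exact .tryE ihP ihQ
  | alap _ ih => exact ih.loop
end

section
/- Relative completeness of the semantic partial correctness calculus SEM (for break-free programs): with G, Atom, Prog, the semantics ⟦·⟧, and the derivability relation ⊢ {c} P {d} defined exactly as in the soundness theorem for SEM (rules [atom], [choice], [comp], [cons], [if], [try], [alap]), if the triple {c} P {d} is partially correct with respect to ⟦·⟧, then ⊢ {c} P {d} is derivable. -/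
/-!
The strongest liberal postcondition is derivable: `⊢ {c} P {Slp(c, ⟦P⟧)}` for every `c` and `P`,
by structural induction on `P`, each rule producing a postcondition contained in `Slp(c, ⟦P⟧)`.
For `P!` the invariant is the set of graphs reachable from `c` by successful runs of `P`; it is
closed under `P`, so [alap] applies. A partially correct triple `{c} P {d}` has
`Slp(c, ⟦P⟧) ⊆ d`, and [cons] finishes.
-/

section Completeness

variable {G Atom : Type} {A : Atom → G → Set (Option G)}

theorem partiallyCorrect_iff_slp_subset {c d : Set G} {P : Prog Atom} :
    PartiallyCorrect A c P d ↔ Slp c (Sem A P) ⊆ d := by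
  constructor
  · rintro h H ⟨g, hg, hH⟩
    exact h g hg H hH
  · intro h g hg H hH
    exact h ⟨g, hg, hH⟩

theorem Deriv.mono_right {c d d' : Set G} {P : Prog Atom} (h : Deriv A c P d) (hd : d ⊆ d') :
    Deriv A c P d' :=
  .cons subset_rfl h hd

section Slp

variable {c : Set G}

theorem slp_seq_subset (P Q : Prog Atom) :
    Slp (Slp c (Sem A P)) (Sem A Q) ⊆ Slp c (Sem A (.seq P Q)) := by
  rintro H ⟨g', ⟨g, hg, hP⟩, hQ⟩
  exact ⟨g, hg, Or.inr (Set.mem_biUnion hP hQ)⟩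

theorem slp_choice_subset {n : ℕ} (f : Fin n → Prog Atom) (i : Fin n) :
    Slp c (Sem A (f i)) ⊆ Slp c (Sem A (.choice n f)) := by
  rintro H ⟨g, hg, hi⟩
  exact ⟨g, hg, Set.mem_iUnion.2 ⟨i, hi⟩⟩

theorem slp_ite_success_subset (C P Q : Prog Atom) :
    Slp (c ∩ SUCCESS A C) (Sem A P) ⊆ Slp c (Sem A (.ite C P Q)) := by
  rintro H ⟨g, ⟨hg, hC⟩, hP⟩
  exact ⟨g, hg, Or.inl ⟨hC, hP⟩⟩

theorem slp_ite_fail_subset (C P Q : Prog Atom) :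
    Slp (c ∩ FAIL A C) (Sem A Q) ⊆ Slp c (Sem A (.ite C P Q)) := by
  rintro H ⟨g, ⟨hg, hC⟩, hQ⟩
  exact ⟨g, hg, Or.inr ⟨hC, hQ⟩⟩

theorem slp_tryE_success_subset (C P Q : Prog Atom) :
    Slp (Slp (c ∩ SUCCESS A C) (Sem A C)) (Sem A P) ⊆ Slp c (Sem A (.tryE C P Q)) := by
  rintro H ⟨g', ⟨g, ⟨hg, -⟩, hC⟩, hP⟩
  exact ⟨g, hg, Or.inl ⟨g', hC, hP⟩⟩

theorem slp_tryE_fail_subset (C P Q : Prog Atom) :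
    Slp (c ∩ FAIL A C) (Sem A Q) ⊆ Slp c (Sem A (.tryE C P Q)) := by
  rintro H ⟨g, ⟨hg, hC⟩, hQ⟩
  exact ⟨g, hg, Or.inr ⟨hC, hQ⟩⟩

end Slp

section Reachable

def Reachable (A : Atom → G → Set (Option G)) (P : Prog Atom) (c : Set G) : Set G :=
  {H | ∃ g ∈ c, Relation.ReflTransGen (fun x y => some y ∈ Sem A P x) g H}

variable {P : Prog Atom} {c : Set G}

theorem subset_reachable : c ⊆ Reachable A P c :=
  fun g hg => ⟨g, hg, .refl⟩

theorem slp_reachable_subset : Slp (Reachable A P c) (Sem A P) ⊆ Reachable A P c := by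
  rintro H ⟨g', ⟨g, hg, hreach⟩, hP⟩
  exact ⟨g, hg, hreach.tail hP⟩

theorem reachable_inter_fail_subset :
    Reachable A P c ∩ FAIL A P ⊆ Slp c (Sem A (.loop P)) := by
  rintro H ⟨⟨g, hg, hreach⟩, hfail⟩
  exact ⟨g, hg, H, rfl, hreach, hfail⟩

end Reachable

theorem Deriv.slp (P : Prog Atom) (c : Set G) : Deriv A c P (Slp c (Sem A P)) := by
  induction P generalizing c with
  | atom a => exact .atom c a
  | seq P Q ihP ihQ => exact .comp (ihP c) ((ihQ _).mono_right (slp_seq_subset P Q))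
  | choice n f ih => exact .choice fun i => (ih i c).mono_right (slp_choice_subset f i)
  | ite C P Q _ ihP ihQ =>
    exact .ifRule ((ihP _).mono_right (slp_ite_success_subset C P Q))
      ((ihQ _).mono_right (slp_ite_fail_subset C P Q))
  | tryE C P Q ihC ihP ihQ =>
    exact .tryRule (.comp (ihC _) ((ihP _).mono_right (slp_tryE_success_subset C P Q)))
      ((ihQ _).mono_right (slp_tryE_fail_subset C P Q))
  | loop P ih =>
    have hinv : Deriv A (Reachable A P c) P (Reachable A P c) :=
      (ih _).mono_right slp_reachable_subset
    exact .cons subset_reachable hinv.alap reachable_inter_fail_subset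

end Completeness

/-- Relative completeness of the semantic partial correctness calculus SEM. -/
theorem SEM_relatively_complete {G Atom : Type} (A : Atom → G → Set (Option G))
    (c d : Set G) (P : Prog Atom) (h : PartiallyCorrect A c P d) :
    Deriv A c P d :=
  (Deriv.slp P c).mono_right (partiallyCorrect_iff_slp_subset.1 h)
end
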